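/- arXiv:1811.05228 — 3 statements merged into one kernel-verified Lean document; each statement's English description precedes it below -/
import Mathlib

section
/- Let (X,<) be a linear order, E a <-convex equivalence relation on X, and E' an equivalence relation on X that is <-convex and is either coarser than E (E refines E') or finer than E (E' refines E). Then E' is <_E-convex, i.e., every E'-class is convex with respect to the order <_E. -/
/-- `leOf r a b`: the reflexive closure of the strict order `r`. -/
def leOf {X : Type*} (r : X → X → Prop) (a b : X) : Prop := r a b ∨ a = b

/-- `R` is a monotone relation between `(A, ltA)` and `(B, ltB)`. -/
def MonotoneRel {A B : Type*} (ltA : A → A → Prop) (ltB : B → B → Prop)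
    (R : A → B → Prop) : Prop :=
  ∀ a a' b b', leOf ltA a a' → R a' b' → leOf ltB b' b → R a b

/-- `I` is an initial part (downward closed set) w.r.t. `lt`. -/
def IsInitialPart {X : Type*} (lt : X → X → Prop) (I : Set X) : Prop :=
  ∀ a ∈ I, ∀ b, lt b a → b ∈ I

/-- `F` is a final part (upward closed set) w.r.t. `lt`. -/
def IsFinalPart {X : Type*} (lt : X → X → Prop) (F : Set X) : Prop :=
  ∀ a ∈ F, ∀ b, lt a b → b ∈ F

/-- `D` is a convex set w.r.t. `lt`. -/
def ConvexSet {X : Type*} (lt : X → X → Prop) (D : Set X) : Prop :=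
  ∀ a ∈ D, ∀ b ∈ D, ∀ c, lt a c → lt c b → c ∈ D

/-- `E` is a `lt`-convex equivalence relation. -/
def ConvexEquiv {X : Type*} (lt : X → X → Prop) (E : X → X → Prop) : Prop :=
  Equivalence E ∧ ∀ a b c, E a b → lt a c → lt c b → E a c

/-- The order `<_E`: reverse inside each `E`-class, keep the order of classes. -/
def ltE {X : Type*} (lt E : X → X → Prop) (x y : X) : Prop :=
  (E x y ∧ lt y x) ∨ (¬ E x y ∧ lt x y)

/-- `D` is a finite union of `lt`-convex sets. -/
def FinUnionConvex {X : Type*} (lt : X → X → Prop) (D : Set X) : Prop :=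
  ∃ (n : ℕ) (C : Fin n → Set X), (∀ i, ConvexSet lt (C i)) ∧ D = ⋃ i, C i

/-!
Inside an `E`-class the order `<_E` is the reverse of `<`, and between distinct `E`-classes it
agrees with `<`. If `E` refines `E'`, then for `a <_E c <_E b` either `c` is `E`-related (hence
`E'`-related) to `a` or to `b`, or `a < c < b`. If `E'` refines `E`, an `E'`-class lies in a single
`E`-class, where `<_E`-convexity is convexity for the reversed order.
-/

namespace ConvexEquiv

variable {X : Type*} {lt E E' : X → X → Prop}

theorem ltE_of_coarser (hE' : ConvexEquiv lt E') (hEE' : ∀ x y, E x y → E' x y) :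
    ConvexEquiv (ltE lt E) E' := by
  obtain ⟨eqv, conv⟩ := hE'
  refine ⟨eqv, fun a b c hab hac hcb => ?_⟩
  rcases hac with ⟨hEac, -⟩ | ⟨-, hac⟩
  · exact hEE' a c hEac
  rcases hcb with ⟨hEcb, -⟩ | ⟨-, hcb⟩
  · exact eqv.trans hab (eqv.symm (hEE' c b hEcb))
  · exact conv a b c hab hac hcb

theorem ltE_of_finer (hE : Equivalence E) (hE' : ConvexEquiv lt E')
    (hE'E : ∀ x y, E' x y → E x y) : ConvexEquiv (ltE lt E) E' := by
  obtain ⟨eqv, conv⟩ := hE'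
  refine ⟨eqv, fun a b c hab hac hcb => ?_⟩
  have hEab := hE'E a b hab
  rcases hac with ⟨hEac, hca⟩ | ⟨hEac, hac⟩ <;> rcases hcb with ⟨hEcb, hbc⟩ | ⟨hEcb, hcb⟩
  · exact eqv.trans hab (conv b a c (eqv.symm hab) hbc hca)
  · exact absurd (hE.trans (hE.symm hEac) hEab) hEcb
  · exact absurd (hE.trans hEab (hE.symm hEcb)) hEac
  · exact conv a b c hab hac hcb

end ConvexEquiv

theorem stmt_7_general {X : Type*} (lt E E' : X → X → Prop)
    (hE : ConvexEquiv lt E) (hE' : ConvexEquiv lt E')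
    (hcf : (∀ x y, E x y → E' x y) ∨ (∀ x y, E' x y → E x y)) :
    ∀ a b c, E' a b → ltE lt E a c → ltE lt E c b → E' a c :=
  (hcf.elim hE'.ltE_of_coarser (hE'.ltE_of_finer hE.1)).2

theorem stmt_7 {X : Type*} (lt E E' : X → X → Prop)
    [IsStrictTotalOrder X lt]
    (hE : ConvexEquiv lt E) (hE' : ConvexEquiv lt E')
    (hcf : (∀ x y, E x y → E' x y) ∨ (∀ x y, E' x y → E x y)) :
    ∀ a b c, E' a b → ltE lt E a c → ltE lt E c b → E' a c :=
  stmt_7_general lt E E' hE hE' hcf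
end

section
/- Let (X,<) be a linear order, E a <-convex equivalence relation, and D ⊆ X a <-convex set. Then D is a union of at most three <_E-convex sets. Consequently, every <-convex set is a finite union of <_E-convex sets, and conversely every <_E-convex set is a finite union of <-convex sets. -/
open Function

section

variable {X : Type*} {lt E : X → X → Prop}

theorem ConvexSet.swap {D : Set X} (hD : ConvexSet lt D) : ConvexSet (swap lt) D :=
  fun a ha b hb c hac hcb => hD b hb a ha c hcb hac

theorem ConvexEquiv.swap (hE : ConvexEquiv lt E) : ConvexEquiv (swap lt) E :=
  ⟨hE.1, fun _ _ c hab hca hbc => hE.1.trans hab (hE.2 _ _ c (hE.1.symm hab) hbc hca)⟩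

theorem ltE_iff_of_rel {x y : X} (h : E x y) : ltE lt E x y ↔ lt y x := by
  simp [ltE, h]

theorem ltE_iff_of_not_rel {x y : X} (h : ¬E x y) : ltE lt E x y ↔ lt x y := by
  simp [ltE, h]

theorem ltE_ltE [Std.Symm E] : ltE (ltE lt E) E = lt := by
  ext x y
  by_cases h : E x y
  · rw [ltE_iff_of_rel h, ltE_iff_of_rel (symm_of E h)]
  · rw [ltE_iff_of_not_rel h, ltE_iff_of_not_rel h]

theorem trichotomous_ltE [Std.Trichotomous lt] [Std.Symm E] :
    Std.Trichotomous (ltE lt E) := by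
  refine ⟨fun a b hab hba => ?_⟩
  by_cases h : E a b
  · rw [ltE_iff_of_rel h] at hab
    rw [ltE_iff_of_rel (symm_of E h)] at hba
    exact Std.Trichotomous.trichotomous a b hba hab
  · have h' : ¬E b a := fun h' => h (symm_of E h')
    rw [ltE_iff_of_not_rel h] at hab
    rw [ltE_iff_of_not_rel h'] at hba
    exact Std.Trichotomous.trichotomous a b hab hba

theorem ConvexEquiv.ltE (hE : ConvexEquiv lt E) : ConvexEquiv (ltE lt E) E := by
  refine ⟨hE.1, fun a b c hab hac hcb => ?_⟩
  by_contra h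
  have hcb' : ¬E c b := fun h' => h (hE.1.trans hab (hE.1.symm h'))
  exact h (hE.2 a b c hab ((ltE_iff_of_not_rel h).1 hac) ((ltE_iff_of_not_rel hcb').1 hcb))

theorem ConvexSet.ltE_of_forall_rel (hE : ConvexEquiv lt E) {D : Set X} (hD : ConvexSet lt D)
    (hrel : ∀ a ∈ D, ∀ b ∈ D, E a b) : ConvexSet (ltE lt E) D := by
  intro a ha b hb c hac hcb
  have hEac : E a c := hE.ltE.2 a b c (hrel a ha b hb) hac hcb
  have hEcb : E c b := hE.1.trans (hE.1.symm hEac) (hrel a ha b hb)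
  exact hD b hb a ha c ((ltE_iff_of_rel hEcb).1 hcb) ((ltE_iff_of_rel hEac).1 hac)

theorem ConvexSet.ltE_of_saturated [Std.Symm E] {D : Set X} (hD : ConvexSet lt D)
    (hsat : ∀ a ∈ D, ∀ b, E a b → b ∈ D) : ConvexSet (ltE lt E) D := by
  intro a ha b hb c hac hcb
  by_cases hEac : E a c
  · exact hsat a ha c hEac
  by_cases hEcb : E c b
  · exact hsat b hb c (symm_of E hEcb)
  exact hD a ha b hb c ((ltE_iff_of_not_rel hEac).1 hac) ((ltE_iff_of_not_rel hEcb).1 hcb)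

/-- The trace on `D` of the (unique, if any) `E`-class that leaves `D` below it. Applied to
`swap lt` it gives the class leaving `D` above it. -/
def lowerEdge (lt E : X → X → Prop) (D : Set X) : Set X :=
  {x | x ∈ D ∧ ∃ y, E x y ∧ y ∉ D ∧ lt y x}

def saturatedPart (E : X → X → Prop) (D : Set X) : Set X :=
  {x | x ∈ D ∧ ∀ y, E x y → y ∈ D}

section Trichotomous

variable [Std.Trichotomous lt] {D : Set X}

theorem mem_lowerEdge_of_rel (hE : Equivalence E) (hD : ConvexSet lt D) {x z : X}
    (hx : x ∈ lowerEdge lt E D) (hz : z ∈ D) (hxz : E x z) : z ∈ lowerEdge lt E D := by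
  obtain ⟨hxD, y, hxy, hyD, hyx⟩ := hx
  refine ⟨hz, y, hE.trans (hE.symm hxz) hxy, hyD, ?_⟩
  rcases trichotomous_of lt z y with hzy | rfl | hyz
  · exact absurd (hD z hz x hxD y hzy hyx) hyD
  · exact absurd hz hyD
  · exact hyz

theorem rel_of_lt_of_mem_lowerEdge (hE : ConvexEquiv lt E) (hD : ConvexSet lt D) {a b : X}
    (ha : a ∈ D) (hb : b ∈ lowerEdge lt E D) (hab : lt a b) : E a b := by
  obtain ⟨hbD, y, hby, hyD, hyb⟩ := hb
  have hya : lt y a := by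
    rcases trichotomous_of lt a y with hay | rfl | hya
    · exact absurd (hD a ha b hbD y hay hyb) hyD
    · exact absurd ha hyD
    · exact hya
  exact hE.1.trans (hE.1.symm (hE.2 y b a (hE.1.symm hby) hya hab)) (hE.1.symm hby)

theorem rel_of_mem_lowerEdge (hE : ConvexEquiv lt E) (hD : ConvexSet lt D) :
    ∀ a ∈ lowerEdge lt E D, ∀ b ∈ lowerEdge lt E D, E a b := by
  intro a ha b hb
  rcases trichotomous_of lt a b with hab | rfl | hba
  · exact rel_of_lt_of_mem_lowerEdge hE hD ha.1 hb hab
  · exact hE.1.refl a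
  · exact hE.1.symm (rel_of_lt_of_mem_lowerEdge hE hD hb.1 ha hba)

theorem convexSet_lowerEdge (hE : ConvexEquiv lt E) (hD : ConvexSet lt D) :
    ConvexSet lt (lowerEdge lt E D) := by
  intro a ha b hb c hac hcb
  have hEac : E a c := hE.2 a b c (rel_of_mem_lowerEdge hE hD a ha b hb) hac hcb
  exact mem_lowerEdge_of_rel hE.1 hD ha (hD a ha.1 b hb.1 c hac hcb) hEac

theorem saturated_saturatedPart (hE : Equivalence E) :
    ∀ a ∈ saturatedPart E D, ∀ b, E a b → b ∈ saturatedPart E D :=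
  fun _ ha b hab => ⟨ha.2 b hab, fun z hbz => ha.2 z (hE.trans hab hbz)⟩

theorem convexSet_saturatedPart (hE : ConvexEquiv lt E) (hD : ConvexSet lt D) :
    ConvexSet lt (saturatedPart E D) := by
  intro a ⟨haD, ha⟩ b ⟨hbD, hb⟩ c hac hcb
  refine ⟨hD a haD b hbD c hac hcb, fun d hcd => ?_⟩
  rcases trichotomous_of lt d a with hda | rfl | had
  · exact ha d (hE.1.symm (hE.2 d c a (hE.1.symm hcd) hda hac))
  · exact haD
  rcases trichotomous_of lt d b with hdb | rfl | hbd
  · exact hD a haD b hbD d had hdb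
  · exact hbD
  · exact hb d (hE.1.trans (hE.1.symm (hE.2 c d b hcd hcb hbd)) hcd)

theorem eq_lowerEdge_union_saturatedPart_union_lowerEdge_swap :
    D = lowerEdge lt E D ∪ saturatedPart E D ∪ lowerEdge (swap lt) E D := by
  ext x
  refine ⟨fun hx => ?_, by rintro ((⟨hx, -⟩ | ⟨hx, -⟩) | ⟨hx, -⟩) <;> exact hx⟩
  by_cases hsat : ∀ y, E x y → y ∈ D
  · exact Or.inl (Or.inr ⟨hx, hsat⟩)
  push Not at hsat
  obtain ⟨y, hxy, hyD⟩ := hsat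
  rcases trichotomous_of lt y x with hyx | rfl | hxy'
  · exact Or.inl (Or.inl ⟨hx, y, hxy, hyD, hyx⟩)
  · exact absurd hx hyD
  · exact Or.inr ⟨hx, y, hxy, hyD, hxy'⟩

theorem ConvexSet.exists_ltE_convex_union_three (hE : ConvexEquiv lt E)
    (hD : ConvexSet lt D) :
    ∃ C₁ C₂ C₃ : Set X, ConvexSet (ltE lt E) C₁ ∧ ConvexSet (ltE lt E) C₂ ∧
      ConvexSet (ltE lt E) C₃ ∧ D = C₁ ∪ C₂ ∪ C₃ := by
  have := hE.1.stdSymm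
  exact ⟨_, _, _,
    (convexSet_lowerEdge hE hD).ltE_of_forall_rel hE (rel_of_mem_lowerEdge hE hD),
    (convexSet_saturatedPart hE hD).ltE_of_saturated (saturated_saturatedPart hE.1),
    (convexSet_lowerEdge hE.swap hD.swap).swap.ltE_of_forall_rel hE
      (rel_of_mem_lowerEdge hE.swap hD.swap),
    eq_lowerEdge_union_saturatedPart_union_lowerEdge_swap⟩

end Trichotomous

theorem finUnionConvex_union_three {r : X → X → Prop} {C₁ C₂ C₃ : Set X}
    (h₁ : ConvexSet r C₁) (h₂ : ConvexSet r C₂) (h₃ : ConvexSet r C₃) :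
    FinUnionConvex r (C₁ ∪ C₂ ∪ C₃) := by
  refine ⟨3, ![C₁, C₂, C₃], fun i => ?_, ?_⟩
  · fin_cases i <;> assumption
  · ext x
    simp [Fin.exists_fin_succ, or_assoc]

end

theorem stmt_8 {X : Type*} (lt E : X → X → Prop)
    [IsStrictTotalOrder X lt] (hE : ConvexEquiv lt E) :
    (∀ D : Set X, ConvexSet lt D →
      ∃ C₁ C₂ C₃ : Set X, ConvexSet (ltE lt E) C₁ ∧ ConvexSet (ltE lt E) C₂ ∧
        ConvexSet (ltE lt E) C₃ ∧ D = C₁ ∪ C₂ ∪ C₃) ∧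
    (∀ D : Set X, ConvexSet lt D → FinUnionConvex (ltE lt E) D) ∧
    (∀ D : Set X, ConvexSet (ltE lt E) D → FinUnionConvex lt D) := by
  have := hE.1.stdSymm
  have : Std.Trichotomous (ltE lt E) := trichotomous_ltE
  refine ⟨fun D hD => hD.exists_ltE_convex_union_three hE, fun D hD => ?_, fun D hD => ?_⟩
  · obtain ⟨C₁, C₂, C₃, h₁, h₂, h₃, rfl⟩ := hD.exists_ltE_convex_union_three hE
    exact finUnionConvex_union_three h₁ h₂ h₃
  · obtain ⟨C₁, C₂, C₃, h₁, h₂, h₃, rfl⟩ := hD.exists_ltE_convex_union_three hE.ltE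
    rw [ltE_ltE] at h₁ h₂ h₃
    exact finUnionConvex_union_three h₁ h₂ h₃
end

section
/- Let X be a set, ≺ and ◁ linear orders on X, E a ≺-convex equivalence relation on X, and R ⊆ X × X a (≺_E, ◁)-monotone relation. Then there exist a ◁-convex equivalence relation F on X, (≺,◁)-monotone relations R₁ and R₂, and a (≺, ◁_F)-monotone relation R₃ such that R = R₁ ∪ (R₂ \ R₃). -/
theorem MonotoneRel.of_lt {A B : Type*} {ltA : A → A → Prop} {ltB : B → B → Prop}
    {R : A → B → Prop} (hA : ∀ a a' b, ltA a a' → R a' b → R a b)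
    (hB : ∀ a b' b, R a b' → ltB b' b → R a b) : MonotoneRel ltA ltB R := by
  intro a a' b b' ha h hb
  have h' : R a b' := by
    rcases ha with ha | rfl
    exacts [hA a a' b' ha h, h]
  rcases hb with hb | rfl
  exacts [hB a b' b h' hb, h']

namespace MonotoneRel

variable {A B : Type*} {ltA : A → A → Prop} {ltB : B → B → Prop} {R : A → B → Prop}

theorem rel_of_lt_left (hR : MonotoneRel ltA ltB R) {a a' : A} {b : B} (ha : ltA a a')
    (h : R a' b) : R a b :=
  hR a a' b b (Or.inl ha) h (Or.inr rfl)

theorem rel_of_lt_right (hR : MonotoneRel ltA ltB R) {a : A} {b' b : B} (h : R a b')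
    (hb : ltB b' b) : R a b :=
  hR a a b b' (Or.inr rfl) h (Or.inl hb)

end MonotoneRel

theorem ConvexEquiv.lt_of_lt_of_not_rel {X : Type*} {lt E : X → X → Prop} [Std.Trichotomous lt]
    (hE : ConvexEquiv lt E) {a a' x x' : X} (ha : lt a a') (hne : ¬ E a a') (hx : E a x)
    (hx' : E a' x') : lt x x' := by
  obtain ⟨hEq, hConv⟩ := hE
  rcases trichotomous_of lt x x' with h | rfl | h
  · exact h
  · exact absurd (hEq.trans hx (hEq.symm hx')) hne
  · exfalso
    rcases trichotomous_of lt x' a with h' | rfl | h'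
    · exact hne (hEq.trans (hEq.symm (hConv x' a' a (hEq.symm hx') h' ha)) (hEq.symm hx'))
    · exact hne (hEq.symm hx')
    · exact hne (hEq.trans (hConv a x x' hx h' h) (hEq.symm hx'))

section Decomposition

variable {X : Type*}

def ClassAll (E R : X → X → Prop) (a b : X) : Prop := ∀ x, E a x → R x b

def ClassAny (E R : X → X → Prop) (a b : X) : Prop := ∃ x, E a x ∧ R x b

def Gap (E R : X → X → Prop) (a b : X) : Prop := ClassAny E R a b ∧ ¬ ClassAll E R a b

def SameGap (E R : X → X → Prop) (b b' : X) : Prop := b = b' ∨ ∃ a, Gap E R a b ∧ Gap E R a b'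

def ClassAllOrMissed (E R : X → X → Prop) (a b : X) : Prop :=
  ClassAll E R a b ∨ (ClassAny E R a b ∧ ¬ R a b)

variable {prec tri E R : X → X → Prop} {a a' b b' c : X}

theorem ClassAll.rel (hE : Equivalence E) (h : ClassAll E R a b) : R a b :=
  h a (hE.refl a)

theorem classAny_of_rel (hE : Equivalence E) (h : R a b) : ClassAny E R a b :=
  ⟨a, hE.refl a, h⟩

theorem gap_of_classAny_of_not_rel (hE : Equivalence E) (h : ClassAny E R a b) (hn : ¬ R a b) :
    Gap E R a b :=
  ⟨h, fun h' => hn (h'.rel hE)⟩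

theorem classAll_congr (hE : Equivalence E) (h : E a a') :
    ClassAll E R a b ↔ ClassAll E R a' b :=
  ⟨fun h' x hx => h' x (hE.trans h hx), fun h' x hx => h' x (hE.trans (hE.symm h) hx)⟩

theorem classAny_congr (hE : Equivalence E) (h : E a a') :
    ClassAny E R a b ↔ ClassAny E R a' b :=
  ⟨fun ⟨x, hx, hr⟩ => ⟨x, hE.trans (hE.symm h) hx, hr⟩,
    fun ⟨x, hx, hr⟩ => ⟨x, hE.trans h hx, hr⟩⟩

theorem gap_congr (hE : Equivalence E) (h : E a a') : Gap E R a b ↔ Gap E R a' b := by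
  rw [Gap, Gap, classAll_congr hE h, classAny_congr hE h]

/-- Between distinct classes `≺_E` is `≺`, so one witness in a higher class serves all of a
lower one. -/
theorem classAll_of_lt_of_not_rel [Std.Trichotomous prec] (hE : ConvexEquiv prec E)
    (hR : MonotoneRel (ltE prec E) tri R) (ha : prec a a') (hne : ¬ E a a')
    (h : ClassAny E R a' b) : ClassAll E R a b := by
  obtain ⟨x', hx', hr⟩ := h
  intro x hx
  have hxx' : ¬ E x x' := fun h' =>
    hne (hE.1.trans hx (hE.1.trans h' (hE.1.symm hx')))
  exact hR.rel_of_lt_left (Or.inr ⟨hxx', hE.lt_of_lt_of_not_rel ha hne hx hx'⟩) hr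

theorem monotoneRel_classAll [Std.Trichotomous prec] (hE : ConvexEquiv prec E)
    (hR : MonotoneRel (ltE prec E) tri R) : MonotoneRel prec tri (ClassAll E R) := by
  refine .of_lt (fun a a' b ha h => ?_) (fun a b' b h hb x hx => hR.rel_of_lt_right (h x hx) hb)
  by_cases he : E a a'
  · exact (classAll_congr hE.1 he).2 h
  · exact classAll_of_lt_of_not_rel hE hR ha he (classAny_of_rel hE.1 (h.rel hE.1))

theorem monotoneRel_classAny [Std.Trichotomous prec] (hE : ConvexEquiv prec E)
    (hR : MonotoneRel (ltE prec E) tri R) : MonotoneRel prec tri (ClassAny E R) := by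
  refine .of_lt (fun a a' b ha h => ?_)
    (fun a b' b ⟨x, hx, hr⟩ hb => ⟨x, hx, hR.rel_of_lt_right hr hb⟩)
  by_cases he : E a a'
  · exact (classAny_congr hE.1 he).2 h
  · exact classAny_of_rel hE.1 ((classAll_of_lt_of_not_rel hE hR ha he h).rel hE.1)

theorem rel_of_gap_of_gap [Std.Trichotomous prec] (hE : ConvexEquiv prec E)
    (hR : MonotoneRel (ltE prec E) tri R) (ha : Gap E R a b) (ha' : Gap E R a' b) : E a a' := by
  by_contra he
  rcases trichotomous_of prec a a' with h | rfl | h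
  · exact ha.2 (classAll_of_lt_of_not_rel hE hR h he ha'.1)
  · exact he (hE.1.refl a)
  · exact ha'.2 (classAll_of_lt_of_not_rel hE hR h (fun h' => he (hE.1.symm h')) ha.1)

theorem convexEquiv_sameGap [Std.Trichotomous prec] [Std.Asymm tri] (hE : ConvexEquiv prec E)
    (hR : MonotoneRel (ltE prec E) tri R) : ConvexEquiv tri (SameGap E R) := by
  refine ⟨⟨fun b => Or.inl rfl, ?_, ?_⟩, ?_⟩
  · rintro b b' (rfl | ⟨a, hb, hb'⟩)
    exacts [Or.inl rfl, Or.inr ⟨a, hb', hb⟩]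
  · rintro b c d (rfl | ⟨a, hb, hc⟩) (rfl | ⟨a', hc', hd⟩)
    exacts [Or.inl rfl, Or.inr ⟨a', hc', hd⟩, Or.inr ⟨a, hb, hc⟩,
      Or.inr ⟨a, hb, (gap_congr hE.1 (rel_of_gap_of_gap hE hR hc hc')).2 hd⟩]
  · rintro b b' c (rfl | ⟨a, hb, hb'⟩) h₁ h₂
    · exact absurd h₂ (asymm_of tri h₁)
    · obtain ⟨x, hx, hr⟩ := hb.1
      exact Or.inr ⟨a, hb, ⟨x, hx, hR.rel_of_lt_right hr h₁⟩,
        fun h => hb'.2 fun x hx => hR.rel_of_lt_right (h x hx) h₂⟩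

theorem classAll_of_classAll_of_gap [Std.Trichotomous prec] (hE : ConvexEquiv prec E)
    (hR : MonotoneRel (ltE prec E) tri R) (ha : ClassAll E R a b') (hc : Gap E R c b')
    (hcb : ClassAny E R c b) : ClassAll E R a b := by
  have he : ¬ E a c := fun he => hc.2 ((classAll_congr hE.1 he).1 ha)
  rcases trichotomous_of prec a c with h | rfl | h
  · exact classAll_of_lt_of_not_rel hE hR h he hcb
  · exact absurd (hE.1.refl a) he
  · exact absurd (classAll_of_lt_of_not_rel hE hR h (fun h' => he (hE.1.symm h'))
      (classAny_of_rel hE.1 (ha.rel hE.1))) hc.2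

theorem monotoneRel_classAllOrMissed [Std.Trichotomous prec] (hE : ConvexEquiv prec E)
    (hR : MonotoneRel (ltE prec E) tri R) :
    MonotoneRel prec (ltE tri (SameGap E R)) (ClassAllOrMissed E R) := by
  refine .of_lt (fun a a' b ha h => ?_) (fun a b' b h hb => ?_)
  · by_cases he : E a a'
    · rcases h with h | ⟨h, hn⟩
      · exact Or.inl ((classAll_congr hE.1 he).2 h)
      · exact Or.inr ⟨(classAny_congr hE.1 he).2 h,
          fun hr => hn (hR.rel_of_lt_left (Or.inl ⟨hE.1.symm he, ha⟩) hr)⟩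
    · have h' : ClassAny E R a' b := by
        rcases h with h | ⟨h, -⟩
        exacts [classAny_of_rel hE.1 (h.rel hE.1), h]
      exact Or.inl (classAll_of_lt_of_not_rel hE hR ha he h')
  · rcases hb with ⟨rfl | ⟨c, hcb', hcb⟩, hlt⟩ | ⟨hnF, hlt⟩
    · exact h
    · rcases h with h | ⟨h, hn⟩
      · exact Or.inl (classAll_of_classAll_of_gap hE hR h hcb' hcb.1)
      · have he := rel_of_gap_of_gap hE hR hcb' (gap_of_classAny_of_not_rel hE.1 h hn)
        exact Or.inr ⟨(classAny_congr hE.1 he).1 hcb.1, fun hr => hn (hR.rel_of_lt_right hr hlt)⟩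
    · rcases h with h | ⟨h, hn⟩
      · exact Or.inl ((monotoneRel_classAll hE hR).rel_of_lt_right h hlt)
      · by_contra hnb
        have hb : Gap E R a b :=
          ⟨(monotoneRel_classAny hE hR).rel_of_lt_right h hlt, fun h' => hnb (Or.inl h')⟩
        exact hnF (Or.inr ⟨a, gap_of_classAny_of_not_rel hE.1 h hn, hb⟩)

theorem rel_iff_classAll_or_classAny_and_not_classAllOrMissed (hE : Equivalence E) :
    R a b ↔ ClassAll E R a b ∨ (ClassAny E R a b ∧ ¬ ClassAllOrMissed E R a b) := by
  constructor
  · intro h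
    by_cases h₁ : ClassAll E R a b
    · exact Or.inl h₁
    · exact Or.inr ⟨classAny_of_rel hE h, by rintro (h' | ⟨-, hn⟩) <;> contradiction⟩
  · rintro (h₁ | ⟨h₂, h₃⟩)
    · exact h₁.rel hE
    · by_contra hn
      exact h₃ (Or.inr ⟨h₂, hn⟩)

end Decomposition

theorem stmt_13 {X : Type*} (prec tri : X → X → Prop)
    [IsStrictTotalOrder X prec] [IsStrictTotalOrder X tri]
    (E : X → X → Prop) (hE : ConvexEquiv prec E)
    (R : X → X → Prop) (hR : MonotoneRel (ltE prec E) tri R) :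
    ∃ (F R₁ R₂ R₃ : X → X → Prop),
      ConvexEquiv tri F ∧
      MonotoneRel prec tri R₁ ∧
      MonotoneRel prec tri R₂ ∧
      MonotoneRel prec (ltE tri F) R₃ ∧
      ∀ x y, R x y ↔ (R₁ x y ∨ (R₂ x y ∧ ¬ R₃ x y)) :=
  ⟨SameGap E R, ClassAll E R, ClassAny E R, ClassAllOrMissed E R,
    convexEquiv_sameGap hE hR, monotoneRel_classAll hE hR, monotoneRel_classAny hE hR,
    monotoneRel_classAllOrMissed hE hR,
    fun _ _ => rel_iff_classAll_or_classAny_and_not_classAllOrMissed hE.1⟩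
end
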